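/- arXiv:2009.06544 — 10 statements merged into one kernel-verified Lean document; each statement's English description precedes it below -/
import Mathlib

section
/- An HT-trace ⟨H,T⟩ of length λ is a model of the excluded-middle theory EM := {☐(a ∨ ¬a) : a∈𝒜} (i.e. ⟨H,T⟩,0⊨☐(a∨¬a) for every atom a∈𝒜) if and only if H = T. -/
inductive Formula (A : Type) : Type
  | atom (a : A)
  | falsum
  | verum
  | conj (φ ψ : Formula A)
  | disj (φ ψ : Formula A)
  | impl (φ ψ : Formula A)
  | prev (φ : Formula A)
  | since (φ ψ : Formula A)
  | trigger (φ ψ : Formula A)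
  | next (φ : Formula A)
  | untl (φ ψ : Formula A)
  | release (φ ψ : Formula A)
  | whil (φ ψ : Formula A)

/-- THT satisfaction: `satAux l T H k φ` is `⟨H,T⟩,k ⊨ φ` on traces of length `l`. -/
def satAux {A : Type} (l : ℕ∞) (T : ℕ → Set A) : (ℕ → Set A) → ℕ → Formula A → Prop
  | H, k, .atom a => a ∈ H k
  | _, _, .falsum => False
  | _, _, .verum => True
  | H, k, .conj φ ψ => satAux l T H k φ ∧ satAux l T H k ψ
  | H, k, .disj φ ψ => satAux l T H k φ ∨ satAux l T H k ψ
  | H, k, .impl φ ψ =>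
      (satAux l T H k φ → satAux l T H k ψ) ∧ (satAux l T T k φ → satAux l T T k ψ)
  | H, k, .prev φ => 0 < k ∧ satAux l T H (k - 1) φ
  | H, k, .since φ ψ =>
      ∃ j, j ≤ k ∧ satAux l T H j ψ ∧ ∀ i, j < i → i ≤ k → satAux l T H i φ
  | H, k, .trigger φ ψ =>
      ∀ j, j ≤ k → satAux l T H j ψ ∨ ∃ i, j < i ∧ i ≤ k ∧ satAux l T H i φ
  | H, k, .next φ => ((k + 1 : ℕ) : ℕ∞) < l ∧ satAux l T H (k + 1) φ
  | H, k, .untl φ ψ =>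
      ∃ j, k ≤ j ∧ (j : ℕ∞) < l ∧ satAux l T H j ψ ∧ ∀ i, k ≤ i → i < j → satAux l T H i φ
  | H, k, .release φ ψ =>
      ∀ j, k ≤ j → (j : ℕ∞) < l → satAux l T H j ψ ∨ ∃ i, k ≤ i ∧ i < j ∧ satAux l T H i φ
  | H, k, .whil φ ψ =>
      (∀ j, k ≤ j → (j : ℕ∞) < l →
          satAux l T H j φ ∨ ∃ i, k ≤ i ∧ i < j ∧ ¬ satAux l T H i ψ)
        ∧
      (∀ j, k ≤ j → (j : ℕ∞) < l →
          satAux l T T j φ ∨ ∃ i, k ≤ i ∧ i < j ∧ ¬ satAux l T T i ψ)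

/-- `Sat l H T k φ` : the HT-trace `⟨H,T⟩` of length `l` satisfies `φ` at time `k`. -/
def Sat {A : Type} (l : ℕ∞) (H T : ℕ → Set A) (k : ℕ) (φ : Formula A) : Prop :=
  satAux l T H k φ

/-- `⟨H,T⟩` is an HT-trace of length `l`. -/
def IsHT {A : Type} (l : ℕ∞) (H T : ℕ → Set A) : Prop :=
  ∀ i : ℕ, (i : ℕ∞) < l → H i ⊆ T i

def TraceLe {A : Type} (l : ℕ∞) (H T : ℕ → Set A) : Prop :=
  ∀ i : ℕ, (i : ℕ∞) < l → H i ⊆ T i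

def TraceEq {A : Type} (l : ℕ∞) (H T : ℕ → Set A) : Prop :=
  ∀ i : ℕ, (i : ℕ∞) < l → H i = T i

def TraceLt {A : Type} (l : ℕ∞) (H T : ℕ → Set A) : Prop :=
  TraceLe l H T ∧ ¬ TraceEq l H T

def Formula.neg {A : Type} (φ : Formula A) : Formula A := .impl φ .falsum
def Formula.always {A : Type} (φ : Formula A) : Formula A := .release .falsum φ
def Formula.ev {A : Type} (φ : Formula A) : Formula A := .untl .verum φ
def Formula.final {A : Type} : Formula A := Formula.neg (.next .verum)
def Formula.wnext {A : Type} (φ : Formula A) : Formula A := .disj (.next φ) .final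
def Formula.initial {A : Type} : Formula A := Formula.neg (.prev .verum)
def Formula.wprev {A : Type} (φ : Formula A) : Formula A := .disj (.prev φ) .initial
def Formula.evP {A : Type} (φ : Formula A) : Formula A := .since .verum φ
def Formula.alwP {A : Type} (φ : Formula A) : Formula A := .trigger .falsum φ

/-- THT-equivalence of two formulas. -/
def ThtEquiv {A : Type} (φ ψ : Formula A) : Prop :=
  ∀ (l : ℕ∞) (H T : ℕ → Set A), IsHT l H T →
    ∀ k : ℕ, (k : ℕ∞) < l → (Sat l H T k φ ↔ Sat l H T k ψ)

/-- `⟨H,T⟩` is a model of the theory `Γ`. -/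
def IsModel {A : Type} (l : ℕ∞) (H T : ℕ → Set A) (Γ : Set (Formula A)) : Prop :=
  (0 : ℕ∞) < l ∧ ∀ φ ∈ Γ, Sat l H T 0 φ

/-- `T` (of length `l`) is a temporal stable model of `Γ`. -/
def IsTS {A : Type} (l : ℕ∞) (T : ℕ → Set A) (Γ : Set (Formula A)) : Prop :=
  IsModel l T T Γ ∧ ∀ H : ℕ → Set A, TraceLt l H T → ¬ IsModel l H T Γ

/-- An HT-trace `⟨H,T⟩` of length `l` is a model of the excluded-middle theory
`EM = {☐(a ∨ ¬a) : a ∈ 𝒜}` iff `H = T`. -/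
theorem em_model_iff_total {A : Type} (l : ℕ∞) (H T : ℕ → Set A) (hHT : IsHT l H T) :
    (∀ a : A, Sat l H T 0 (Formula.always (.disj (.atom a) (Formula.neg (.atom a))))) ↔
      TraceEq l H T := by
  constructor
  · intro h i hi
    apply Set.Subset.antisymm (hHT i hi)
    intro a ha
    rcases h a i (Nat.zero_le i) hi with h1 | ⟨j, _, hj, hf⟩
    · rcases h1 with h1 | ⟨h1, h2⟩
      · exact h1
      · exact absurd ha h2
    · exact absurd hf (by exact fun x => x.elim)
  · intro h a j _ hj
    left
    by_cases ha : a ∈ T j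
    · left; show a ∈ H j; rw [h j hj]; exact ha
    · right
      exact ⟨fun hx => ha (hHT j hj hx), ha⟩
end

section
/- Let Γ be a theory over 𝒜 and EM := {☐(a ∨ ¬a) : a∈𝒜}. Then a trace T is a temporal stable model of Γ ∪ EM if and only if the total HT-trace ⟨T,T⟩ is a model of Γ (equivalently, T,0⊨φ in LTL for all φ∈Γ). -/
/-- The excluded-middle theory `EM = {☐(a ∨ ¬a) : a ∈ 𝒜}`. -/
def EM (A : Type) : Set (Formula A) :=
  Set.range fun a : A => Formula.always (.disj (.atom a) (Formula.neg (.atom a)))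

/-- A trace `T` is a temporal stable model of `Γ ∪ EM` iff the total HT-trace
`⟨T,T⟩` is a model of `Γ`. -/
theorem ts_model_union_em_iff {A : Type} (l : ℕ∞) (T : ℕ → Set A) (Γ : Set (Formula A)) :
    IsTS l T (Γ ∪ EM A) ↔ IsModel l T T Γ := by
  constructor
  · rintro ⟨⟨hl, hm⟩, _⟩
    exact ⟨hl, fun φ hφ => hm φ (Or.inl hφ)⟩
  · rintro ⟨hl, hm⟩
    have hEM : ∀ φ ∈ EM A, Sat l T T 0 φ := by
      rintro _ ⟨a, rfl⟩
      intro j _ _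
      left
      by_cases h : a ∈ T j
      · exact Or.inl h
      · exact Or.inr ⟨fun h' => h h', fun h' => h h'⟩
    refine ⟨⟨hl, fun φ hφ => hφ.elim (hm φ) (hEM φ)⟩, ?_⟩
    rintro H ⟨hle, hne⟩ ⟨_, hmod⟩
    simp only [TraceEq, not_forall] at hne
    obtain ⟨i, hil, hneq⟩ := hne
    obtain ⟨a, haT, haH⟩ : ∃ a, a ∈ T i ∧ a ∉ H i := by
      by_contra hc
      push_neg at hc
      exact hneq (Set.Subset.antisymm (hle i hil) hc)
    have := hmod _ (Or.inr ⟨a, rfl⟩) i (Nat.zero_le i) hil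
    rcases this with h | ⟨_, _, _, hf⟩
    · rcases h with h | ⟨_, h2⟩
      · exact haH h
      · exact h2 haT
    · exact hf
end

section
/- Let α and β be LTL-equivalent temporal formulas (⟨T,T⟩,k⊨α ⇔ ⟨T,T⟩,k⊨β for every trace T and every k<|T|), and let γ be the theory {β → ☐(a ∨ ¬a) : a∈𝒜}. Then for every trace T the following are equivalent: (1) there exists a trace H with H<T such that ⟨H,T⟩,0 ⊭ α→β; (2) T is a temporal stable model of {β}∪γ but T is not a temporal stable model of {α}∪γ. -/
/-!
On a total trace every axiom `☐(a ∨ ¬a)` holds, while on `⟨H,T⟩` with `H < T` it fails for the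
atom and position where `H` and `T` differ. Hence the models `⟨H,T⟩` of `{φ} ∪ γ` with `H < T`
are exactly those with `⟨H,T⟩,0 ⊨ φ` and `⟨H,T⟩,0 ⊭ β`: `T` is a stable model of `{β} ∪ γ` as
soon as `T ⊨ β`, and fails to be one of `{α} ∪ γ` exactly when some `H < T` satisfies `α` but
not `β`. By persistence and LTL-equivalence, that is the failure of `α → β` at `⟨H,T⟩`.
-/

namespace Formula

variable {A : Type}

def excludedMiddle (a : A) : Formula A := .disj (.atom a) (atom a).neg

def guardedExcludedMiddle (β : Formula A) : Set (Formula A) :=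
  Set.range fun a : A => .impl β (excludedMiddle a).always

end Formula

open Formula

section

variable {A : Type} {l : ℕ∞} {H T : ℕ → Set A}

theorem sat_impl {k : ℕ} {φ ψ : Formula A} :
    Sat l H T k (.impl φ ψ) ↔
      (Sat l H T k φ → Sat l H T k ψ) ∧ (Sat l T T k φ → Sat l T T k ψ) :=
  Iff.rfl

theorem sat_total_of_sat (hHT : IsHT l H T) (φ : Formula A) {k : ℕ} (hk : (k : ℕ∞) < l)
    (h : Sat l H T k φ) : Sat l T T k φ := by
  unfold Sat at h ⊢
  induction φ generalizing k with
  | atom a => exact hHT k hk h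
  | falsum | verum => exact h
  | impl | whil => exact ⟨h.2, h.2⟩
  | conj φ ψ ihφ ihψ => exact ⟨ihφ hk h.1, ihψ hk h.2⟩
  | disj φ ψ ihφ ihψ => exact h.imp (ihφ hk) (ihψ hk)
  | prev φ ih => exact ⟨h.1, ih ((Nat.cast_le.2 (Nat.sub_le k 1)).trans_lt hk) h.2⟩
  | next φ ih => exact ⟨h.1, ih h.1 h.2⟩
  | since φ ψ ihφ ihψ =>
      obtain ⟨j, hjk, hψ, hφ⟩ := h
      exact ⟨j, hjk, ihψ ((Nat.cast_le.2 hjk).trans_lt hk) hψ,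
        fun i hji hik => ihφ ((Nat.cast_le.2 hik).trans_lt hk) (hφ i hji hik)⟩
  | trigger φ ψ ihφ ihψ =>
      intro j hjk
      refine (h j hjk).imp (ihψ ((Nat.cast_le.2 hjk).trans_lt hk)) ?_
      exact fun ⟨i, hji, hik, hφ⟩ => ⟨i, hji, hik, ihφ ((Nat.cast_le.2 hik).trans_lt hk) hφ⟩
  | untl φ ψ ihφ ihψ =>
      obtain ⟨j, hkj, hjl, hψ, hφ⟩ := h
      exact ⟨j, hkj, hjl, ihψ hjl hψ,
        fun i hki hij => ihφ ((Nat.cast_lt.2 hij).trans hjl) (hφ i hki hij)⟩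
  | release φ ψ ihφ ihψ =>
      intro j hkj hjl
      refine (h j hkj hjl).imp (ihψ hjl) ?_
      exact fun ⟨i, hki, hij, hφ⟩ => ⟨i, hki, hij, ihφ ((Nat.cast_lt.2 hij).trans hjl) hφ⟩

theorem sat_total_always_excludedMiddle (a : A) (k : ℕ) :
    Sat l T T k (always (excludedMiddle a)) :=
  fun j _ _ => .inl ((em (a ∈ T j)).imp id fun h => ⟨h, h⟩)

theorem TraceLt.pos (h : TraceLt l H T) : 0 < l := by
  refine pos_iff_ne_zero.2 fun hl => h.2 fun i hi => ?_
  simp [hl] at hi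

theorem TraceLt.not_forall_sat_always_excludedMiddle (h : TraceLt l H T) :
    ¬ ∀ a, Sat l H T 0 (always (excludedMiddle a)) := by
  refine fun hem => h.2 fun i hi => (h.1 i hi).antisymm fun a ha => ?_
  rcases hem a i i.zero_le hi with (hH | hnot) | ⟨_, _, _, hfalse⟩
  · exact hH
  · exact absurd ha hnot.2
  · exact hfalse.elim

theorem isModel_singleton_union_guardedExcludedMiddle_iff {φ β : Formula A} :
    IsModel l H T ({φ} ∪ guardedExcludedMiddle β) ↔
      0 < l ∧ Sat l H T 0 φ ∧ ∀ a, Sat l H T 0 β → Sat l H T 0 (always (excludedMiddle a)) := by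
  simp only [IsModel, Set.singleton_union, Set.forall_mem_insert, guardedExcludedMiddle,
    Set.forall_mem_range, sat_impl]
  exact and_congr_right' <| and_congr_right' <|
    forall_congr' fun a => and_iff_left fun _ => sat_total_always_excludedMiddle a 0

theorem isTS_singleton_union_guardedExcludedMiddle_iff {φ β : Formula A} :
    IsTS l T ({φ} ∪ guardedExcludedMiddle β) ↔
      (0 < l ∧ Sat l T T 0 φ) ∧ ∀ H, TraceLt l H T → Sat l H T 0 φ → Sat l H T 0 β := by
  simp only [IsTS, isModel_singleton_union_guardedExcludedMiddle_iff]
  refine and_congr (and_congr_right' (and_iff_left fun a _ => sat_total_always_excludedMiddle a 0))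
    (forall_congr' fun H => forall_congr' fun hlt => ⟨fun hnot hφ => ?_, ?_⟩)
  · by_contra hβ
    exact hnot ⟨hlt.pos, hφ, fun _ hβ' => absurd hβ' hβ⟩
  · rintro himp ⟨-, hφ, hem⟩
    exact hlt.not_forall_sat_always_excludedMiddle fun a => hem a (himp hφ)

end

/-- Lemma 1: for LTL-equivalent `α`, `β` and the context theory
`γ = {β → ☐(a ∨ ¬a) : a ∈ 𝒜}`, a trace `T` admits some `H < T` with
`⟨H,T⟩,0 ⊭ α → β` iff `T` is a temporal stable model of `{β} ∪ γ`
but not of `{α} ∪ γ`. -/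
theorem lemma_one {A : Type} (α β : Formula A)
    (hLTL : ∀ (l : ℕ∞) (T : ℕ → Set A) (k : ℕ), (k : ℕ∞) < l →
      (Sat l T T k α ↔ Sat l T T k β))
    (γ : Set (Formula A))
    (hγ : γ = Set.range fun a : A =>
      Formula.impl β (Formula.always (.disj (.atom a) (Formula.neg (.atom a)))))
    (l : ℕ∞) (T : ℕ → Set A) :
    (∃ H : ℕ → Set A, TraceLt l H T ∧ ¬ Sat l H T 0 (.impl α β)) ↔
      (IsTS l T ({β} ∪ γ) ∧ ¬ IsTS l T ({α} ∪ γ)) := by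
  change γ = guardedExcludedMiddle β at hγ
  simp only [hγ, isTS_singleton_union_guardedExcludedMiddle_iff]
  constructor
  · rintro ⟨H, hlt, hαβ⟩
    have hl := hlt.pos
    have hLTL₀ := hLTL l T 0 hl
    obtain ⟨hα, hβ⟩ : Sat l H T 0 α ∧ ¬ Sat l H T 0 β := by
      rw [sat_impl] at hαβ
      tauto
    have hTβ := hLTL₀.1 (sat_total_of_sat hlt.1 α hl hα)
    exact ⟨⟨⟨hl, hTβ⟩, fun _ _ => id⟩, fun h => hβ (h.2 H hlt hα)⟩
  · rintro ⟨⟨⟨hl, hTβ⟩, -⟩, hnot⟩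
    push Not at hnot
    obtain ⟨H, hlt, hα, hβ⟩ := hnot ⟨hl, (hLTL l T 0 hl).2 hTβ⟩
    exact ⟨H, hlt, fun h => hβ (h.1 hα)⟩
end

section
/- De Morgan laws in THT: for all temporal formulas φ,ψ the following THT-equivalences hold: ¬(φ∧ψ) ≡ ¬φ∨¬ψ; ¬(φ∨ψ) ≡ ¬φ∧¬ψ; ¬(φUψ) ≡ ¬φR¬ψ; ¬(φRψ) ≡ ¬φU¬ψ; ¬(φWψ) ≡ ¬¬ψ U ¬φ; ¬○φ ≡ ○̂¬φ; ¬○̂φ ≡ ○¬φ. -/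
lemma cast_lt_of_le' {k j : ℕ} {l : ℕ∞} (h : j ≤ k) (hk : (k : ℕ∞) < l) : (j : ℕ∞) < l :=
  lt_of_le_of_lt (by exact_mod_cast h) hk

lemma pers {A : Type} {l : ℕ∞} {H T : ℕ → Set A}
    (hHT : ∀ i : ℕ, (i : ℕ∞) < l → H i ⊆ T i) :
    ∀ φ : Formula A, ∀ k : ℕ, (k : ℕ∞) < l → satAux l T H k φ → satAux l T T k φ := by
  intro φ
  induction φ with
  | atom a => intro k hk h; exact hHT k hk h
  | falsum => intro k hk h; exact h
  | verum => intro _ _ _; trivial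
  | conj φ ψ ihφ ihψ => intro k hk h; exact ⟨ihφ k hk h.1, ihψ k hk h.2⟩
  | disj φ ψ ihφ ihψ =>
      intro k hk h
      exact h.elim (fun h => Or.inl (ihφ k hk h)) (fun h => Or.inr (ihψ k hk h))
  | impl φ ψ _ _ => intro k hk h; exact ⟨h.2, h.2⟩
  | prev φ ih =>
      intro k hk h
      exact ⟨h.1, ih (k - 1) (cast_lt_of_le' (Nat.sub_le k 1) hk) h.2⟩
  | since φ ψ ihφ ihψ =>
      rintro k hk ⟨j, hj, hψ, hφ⟩
      exact ⟨j, hj, ihψ j (cast_lt_of_le' hj hk) hψ,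
        fun i h1 h2 => ihφ i (cast_lt_of_le' h2 hk) (hφ i h1 h2)⟩
  | trigger φ ψ ihφ ihψ =>
      intro k hk h j hj
      rcases h j hj with hψ | ⟨i, h1, h2, hφ⟩
      · exact Or.inl (ihψ j (cast_lt_of_le' hj hk) hψ)
      · exact Or.inr ⟨i, h1, h2, ihφ i (cast_lt_of_le' h2 hk) hφ⟩
  | next φ ih => intro k hk h; exact ⟨h.1, ih (k + 1) h.1 h.2⟩
  | untl φ ψ ihφ ihψ =>
      rintro k hk ⟨j, hkj, hjl, hψ, hφ⟩
      exact ⟨j, hkj, hjl, ihψ j hjl hψ,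
        fun i h1 h2 => ihφ i (cast_lt_of_le' h2.le hjl) (hφ i h1 h2)⟩
  | release φ ψ ihφ ihψ =>
      intro k hk h j hkj hjl
      rcases h j hkj hjl with hψ | ⟨i, h1, h2, hφ⟩
      · exact Or.inl (ihψ j hjl hψ)
      · exact Or.inr ⟨i, h1, h2, ihφ i (cast_lt_of_le' h2.le hjl) hφ⟩
  | whil φ ψ _ _ => intro k hk h; exact ⟨h.2, h.2⟩

lemma sat_neg {A : Type} {l : ℕ∞} {H T : ℕ → Set A}
    (hHT : ∀ i : ℕ, (i : ℕ∞) < l → H i ⊆ T i)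
    (φ : Formula A) (k : ℕ) (hk : (k : ℕ∞) < l) :
    satAux l T H k (Formula.neg φ) ↔ ¬ satAux l T T k φ := by
  constructor
  · intro h; exact h.2
  · intro h; exact ⟨fun hh => h (pers hHT φ k hk hh), h⟩

/-- De Morgan laws in THT. -/
theorem de_morgan_tht {A : Type} (φ ψ : Formula A) :
    ThtEquiv (Formula.neg (.conj φ ψ)) (.disj (Formula.neg φ) (Formula.neg ψ))
    ∧ ThtEquiv (Formula.neg (.disj φ ψ)) (.conj (Formula.neg φ) (Formula.neg ψ))
    ∧ ThtEquiv (Formula.neg (.untl φ ψ)) (.release (Formula.neg φ) (Formula.neg ψ))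
    ∧ ThtEquiv (Formula.neg (.release φ ψ)) (.untl (Formula.neg φ) (Formula.neg ψ))
    ∧ ThtEquiv (Formula.neg (.whil φ ψ)) (.untl (Formula.neg (Formula.neg ψ)) (Formula.neg φ))
    ∧ ThtEquiv (Formula.neg (.next φ)) (Formula.wnext (Formula.neg φ))
    ∧ ThtEquiv (Formula.neg (Formula.wnext φ)) (.next (Formula.neg φ)) := by
  have hrefl : ∀ (l : ℕ∞) (T : ℕ → Set A) (i : ℕ), (i : ℕ∞) < l → T i ⊆ T i :=
    fun _ _ _ _ => subset_rfl
  refine ⟨?_, ?_, ?_, ?_, ?_, ?_, ?_⟩ <;> intro l H T hHT k hk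
  -- 1: ¬(φ∧ψ) ≡ ¬φ∨¬ψ
  · show satAux l T H k (Formula.neg (.conj φ ψ)) ↔
      satAux l T H k (Formula.neg φ) ∨ satAux l T H k (Formula.neg ψ)
    rw [sat_neg hHT _ k hk, sat_neg hHT _ k hk, sat_neg hHT _ k hk]
    show ¬ (satAux l T T k φ ∧ satAux l T T k ψ) ↔ _
    tauto
  -- 2: ¬(φ∨ψ) ≡ ¬φ∧¬ψ
  · show satAux l T H k (Formula.neg (.disj φ ψ)) ↔
      satAux l T H k (Formula.neg φ) ∧ satAux l T H k (Formula.neg ψ)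
    rw [sat_neg hHT _ k hk, sat_neg hHT _ k hk, sat_neg hHT _ k hk]
    show ¬ (satAux l T T k φ ∨ satAux l T T k ψ) ↔ _
    tauto
  -- 3: ¬(φ U ψ) ≡ ¬φ R ¬ψ
  · show satAux l T H k (Formula.neg (.untl φ ψ)) ↔
      satAux l T H k (.release (Formula.neg φ) (Formula.neg ψ))
    rw [sat_neg hHT _ k hk]
    constructor
    · intro h j hkj hjl
      by_cases hψ : satAux l T T j ψ
      · right
        by_contra hc
        push_neg at hc
        apply h
        refine ⟨j, hkj, hjl, hψ, fun i h1 h2 => ?_⟩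
        have hil := cast_lt_of_le' h2.le hjl
        by_contra hφ
        exact hc i h1 h2 ((sat_neg hHT φ i hil).mpr hφ)
      · exact Or.inl ((sat_neg hHT ψ j hjl).mpr hψ)
    · rintro h ⟨j, hkj, hjl, hψ, hφ⟩
      rcases h j hkj hjl with hnψ | ⟨i, h1, h2, hnφ⟩
      · exact (sat_neg hHT ψ j hjl).mp hnψ hψ
      · exact (sat_neg hHT φ i (cast_lt_of_le' h2.le hjl)).mp hnφ (hφ i h1 h2)
  -- 4: ¬(φ R ψ) ≡ ¬φ U ¬ψ
  · show satAux l T H k (Formula.neg (.release φ ψ)) ↔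
      satAux l T H k (.untl (Formula.neg φ) (Formula.neg ψ))
    rw [sat_neg hHT _ k hk]
    constructor
    · intro h
      by_contra hc
      apply h
      intro j hkj hjl
      by_cases hψ : satAux l T T j ψ
      · exact Or.inl hψ
      · right
        by_contra hno
        push_neg at hno
        apply hc
        refine ⟨j, hkj, hjl, (sat_neg hHT ψ j hjl).mpr hψ, fun i h1 h2 => ?_⟩
        exact (sat_neg hHT φ i (cast_lt_of_le' h2.le hjl)).mpr (hno i h1 h2)
    · rintro ⟨j, hkj, hjl, hnψ, hφ⟩ h
      rcases h j hkj hjl with hψ | ⟨i, h1, h2, hφi⟩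
      · exact (sat_neg hHT ψ j hjl).mp hnψ hψ
      · exact (sat_neg hHT φ i (cast_lt_of_le' h2.le hjl)).mp (hφ i h1 h2) hφi
  -- 5: ¬(φ W ψ) ≡ ¬¬ψ U ¬φ
  · show satAux l T H k (Formula.neg (.whil φ ψ)) ↔
      satAux l T H k (.untl (Formula.neg (Formula.neg ψ)) (Formula.neg φ))
    rw [sat_neg hHT _ k hk]
    constructor
    · intro h
      by_contra hc
      apply h
      have hC : ∀ j, k ≤ j → (j : ℕ∞) < l →
          satAux l T T j φ ∨ ∃ i, k ≤ i ∧ i < j ∧ ¬ satAux l T T i ψ := by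
        intro j hkj hjl
        by_cases hφ : satAux l T T j φ
        · exact Or.inl hφ
        · right
          by_contra hno
          push_neg at hno
          apply hc
          refine ⟨j, hkj, hjl, (sat_neg hHT φ j hjl).mpr hφ, fun i h1 h2 => ?_⟩
          have hil := cast_lt_of_le' h2.le hjl
          exact (sat_neg hHT (Formula.neg ψ) i hil).mpr
            (fun hn => (sat_neg (hrefl l T) ψ i hil).mp hn (hno i h1 h2))
      exact ⟨hC, hC⟩
    · rintro ⟨j, hkj, hjl, hnφ, hψ⟩ ⟨hC, _⟩
      rcases hC j hkj hjl with hφ | ⟨i, h1, h2, hnψ⟩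
      · exact (sat_neg hHT φ j hjl).mp hnφ hφ
      · have hil := cast_lt_of_le' h2.le hjl
        exact (sat_neg hHT (Formula.neg ψ) i hil).mp (hψ i h1 h2)
          ((sat_neg (hrefl l T) ψ i hil).mpr hnψ)
  -- 6: ¬○φ ≡ ○̂¬φ
  · show satAux l T H k (Formula.neg (.next φ)) ↔
      satAux l T H k (.next (Formula.neg φ)) ∨ satAux l T H k Formula.final
    rw [sat_neg hHT _ k hk]
    constructor
    · intro h
      by_cases hn : ((k + 1 : ℕ) : ℕ∞) < l
      · exact Or.inl ⟨hn, (sat_neg hHT φ (k + 1) hn).mpr (fun hf => h ⟨hn, hf⟩)⟩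
      · exact Or.inr ((sat_neg hHT (.next .verum) k hk).mpr (fun hf => hn hf.1))
    · rintro (⟨hn, hnφ⟩ | hfin) ⟨h1, h2⟩
      · exact (sat_neg hHT φ (k + 1) hn).mp hnφ h2
      · exact (sat_neg hHT (.next .verum) k hk).mp hfin ⟨h1, trivial⟩
  -- 7: ¬○̂φ ≡ ○¬φ
  · show satAux l T H k (Formula.neg (Formula.wnext φ)) ↔
      satAux l T H k (.next (Formula.neg φ))
    rw [sat_neg hHT _ k hk]
    constructor
    · intro h
      by_cases hn : ((k + 1 : ℕ) : ℕ∞) < l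
      · exact ⟨hn, (sat_neg hHT φ (k + 1) hn).mpr (fun hf => h (Or.inl ⟨hn, hf⟩))⟩
      · exact absurd (Or.inr ((sat_neg (hrefl l T) (.next .verum) k hk).mpr
          (fun hf => hn hf.1))) h
    · rintro ⟨hn, hnφ⟩ (⟨_, hf⟩ | hfin)
      · exact (sat_neg hHT φ (k + 1) hn).mp hnφ hf
      · exact (sat_neg (hrefl l T) (.next .verum) k hk).mp hfin ⟨hn, trivial⟩
end

section
/- Persistence: for every HT-trace ⟨H,T⟩ of length λ, every temporal formula φ and every k<λ: if ⟨H,T⟩,k ⊨ φ then ⟨T,T⟩,k ⊨ φ. -/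
/-- Persistence: whatever `⟨H,T⟩` satisfies is also satisfied by `⟨T,T⟩`. -/
theorem persistence {A : Type} (l : ℕ∞) (H T : ℕ → Set A) (hHT : IsHT l H T)
    (φ : Formula A) (k : ℕ) (hk : (k : ℕ∞) < l)
    (h : Sat l H T k φ) : Sat l T T k φ := by
  induction φ generalizing k with
  | atom a => exact hHT k hk h
  | falsum => exact h
  | verum => trivial
  | conj φ ψ ihφ ihψ => exact ⟨ihφ k hk h.1, ihψ k hk h.2⟩
  | disj φ ψ ihφ ihψ =>
      rcases h with h | h
      · exact Or.inl (ihφ k hk h)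
      · exact Or.inr (ihψ k hk h)
  | impl φ ψ ihφ ihψ => exact ⟨h.2, h.2⟩
  | prev φ ih =>
      exact ⟨h.1, ih (k-1) (lt_of_le_of_lt (by exact_mod_cast Nat.sub_le k 1) hk) h.2⟩
  | since φ ψ ihφ ihψ =>
      obtain ⟨j, hj, hψ, hφ⟩ := h
      exact ⟨j, hj, ihψ j (lt_of_le_of_lt (by exact_mod_cast hj) hk) hψ,
        fun i h1 h2 => ihφ i (lt_of_le_of_lt (by exact_mod_cast h2) hk) (hφ i h1 h2)⟩
  | trigger φ ψ ihφ ihψ =>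
      intro j hj
      rcases h j hj with h | ⟨i, h1, h2, h3⟩
      · exact Or.inl (ihψ j (lt_of_le_of_lt (by exact_mod_cast hj) hk) h)
      · exact Or.inr ⟨i, h1, h2, ihφ i (lt_of_le_of_lt (by exact_mod_cast h2) hk) h3⟩
  | next φ ih => exact ⟨h.1, ih (k+1) h.1 h.2⟩
  | untl φ ψ ihφ ihψ =>
      obtain ⟨j, hj, hjl, hψ, hφ⟩ := h
      exact ⟨j, hj, hjl, ihψ j hjl hψ,
        fun i h1 h2 => ihφ i (lt_of_lt_of_le (by exact_mod_cast h2) hjl.le) (hφ i h1 h2)⟩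
  | release φ ψ ihφ ihψ =>
      intro j hj hjl
      rcases h j hj hjl with h | ⟨i, h1, h2, h3⟩
      · exact Or.inl (ihψ j hjl h)
      · exact Or.inr ⟨i, h1, h2, ihφ i (lt_of_lt_of_le (by exact_mod_cast h2) hjl.le) h3⟩
  | whil φ ψ ihφ ihψ => exact ⟨h.2, h.2⟩
end

section
/- Let φ and ψ be implication-free temporal formulas, i.e., formulas built only from atoms, ⊥, ⊤, ∧, ∨, ●, S, T, ○, U and R (containing no → and no W). Then φ and ψ are LTL-equivalent (⟨T,T⟩,k⊨φ ⇔ ⟨T,T⟩,k⊨ψ for every trace T and every k<|T|) if and only if φ≡ψ, i.e., they are THT-equivalent. -/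
/-- Implication-free temporal formulas: built only from atoms, ⊥, ⊤, ∧, ∨, ●, S, T, ○, U, R
(no → and no W). -/
def ImpFree {A : Type} : Formula A → Prop
  | .atom _ => True
  | .falsum => True
  | .verum => True
  | .conj φ ψ => ImpFree φ ∧ ImpFree ψ
  | .disj φ ψ => ImpFree φ ∧ ImpFree ψ
  | .impl _ _ => False
  | .prev φ => ImpFree φ
  | .since φ ψ => ImpFree φ ∧ ImpFree ψ
  | .trigger φ ψ => ImpFree φ ∧ ImpFree ψ
  | .next φ => ImpFree φ
  | .untl φ ψ => ImpFree φ ∧ ImpFree ψ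
  | .release φ ψ => ImpFree φ ∧ ImpFree ψ
  | .whil _ _ => False

lemma satAux_T_irrel {A : Type} (l : ℕ∞) (φ : Formula A) (h : ImpFree φ) :
    ∀ (T T' H : ℕ → Set A) (k : ℕ), satAux l T H k φ ↔ satAux l T' H k φ := by
  induction φ with
  | atom a => intros; rfl
  | falsum => intros; rfl
  | verum => intros; rfl
  | conj φ ψ ihφ ihψ =>
      intro T T' H k
      simp only [satAux, ihφ h.1 T T' H, ihψ h.2 T T' H]
  | disj φ ψ ihφ ihψ =>
      intro T T' H k
      simp only [satAux, ihφ h.1 T T' H, ihψ h.2 T T' H]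
  | impl φ ψ _ _ => exact absurd h (by simp [ImpFree])
  | prev φ ih =>
      intro T T' H k
      simp only [satAux, ih h T T' H]
  | since φ ψ ihφ ihψ =>
      intro T T' H k
      simp only [satAux, ihφ h.1 T T' H, ihψ h.2 T T' H]
  | trigger φ ψ ihφ ihψ =>
      intro T T' H k
      simp only [satAux, ihφ h.1 T T' H, ihψ h.2 T T' H]
  | next φ ih =>
      intro T T' H k
      simp only [satAux, ih h T T' H]
  | untl φ ψ ihφ ihψ =>
      intro T T' H k
      simp only [satAux, ihφ h.1 T T' H, ihψ h.2 T T' H]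
  | release φ ψ ihφ ihψ =>
      intro T T' H k
      simp only [satAux, ihφ h.1 T T' H, ihψ h.2 T T' H]
  | whil φ ψ _ _ => exact absurd h (by simp [ImpFree])

/-- For implication-free formulas, LTL-equivalence coincides with THT-equivalence. -/
theorem impfree_ltl_equiv_iff_tht_equiv {A : Type} (φ ψ : Formula A)
    (hφ : ImpFree φ) (hψ : ImpFree ψ) :
    (∀ (l : ℕ∞) (T : ℕ → Set A) (k : ℕ), (k : ℕ∞) < l →
        (Sat l T T k φ ↔ Sat l T T k ψ)) ↔
      ThtEquiv φ ψ := by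
  constructor
  · intro hltl l H T _ k hk
    have e1 : Sat l H T k φ ↔ Sat l H H k φ := satAux_T_irrel l φ hφ T H H k
    have e2 : Sat l H T k ψ ↔ Sat l H H k ψ := satAux_T_irrel l ψ hψ T H H k
    rw [e1, e2]
    exact hltl l H k hk
  · intro htht l T k hk
    exact htht l T T (fun _ _ => le_rfl) k hk
end

section
/- Three-valued characterization of THT: let ⟨H,T⟩ be an HT-trace of length λ and m its associated three-valued valuation. Then for every temporal formula φ and every k<λ: (i) ⟨H,T⟩,k ⊨ φ if and only if m_k(φ)=2, and (ii) ⟨T,T⟩,k ⊨ φ if and only if m_k(φ)≠0. -/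
open Classical

/-- Minimum of a set of truth values, with `min ∅ = 2`. -/
noncomputable def vmin (S : Set ℕ∞) : ℕ∞ := sInf (insert 2 S)

/-- Maximum of a set of truth values, with `max ∅ = 0`. -/
noncomputable def vmax (S : Set ℕ∞) : ℕ∞ := sSup (insert 0 S)

/-- Three-valued implication: `imp x y = 2` if `x ≤ y`, else `y`. -/
def vimp (x y : ℕ∞) : ℕ∞ := if x ≤ y then 2 else y

/-- The three-valued valuation `m` associated with the HT-trace `⟨H,T⟩` of length `l`:
`val l H T k φ` is `m_k(φ) ∈ {0,1,2}`. -/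
noncomputable def val {A : Type} (l : ℕ∞) (H T : ℕ → Set A) : ℕ → Formula A → ℕ∞
  | k, .atom a => if a ∈ H k then 2 else if a ∈ T k then 1 else 0
  | _, .falsum => 0
  | _, .verum => 2
  | k, .conj φ ψ => min (val l H T k φ) (val l H T k ψ)
  | k, .disj φ ψ => max (val l H T k φ) (val l H T k ψ)
  | k, .impl φ ψ => vimp (val l H T k φ) (val l H T k ψ)
  | k, .prev φ => if k = 0 then 0 else val l H T (k - 1) φ
  | k, .since φ ψ =>
      vmax { v | ∃ j, j ≤ k ∧
        v = min (val l H T j ψ) (vmin { x | ∃ i, j < i ∧ i ≤ k ∧ x = val l H T i φ }) }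
  | k, .trigger φ ψ =>
      vmin { v | ∃ j, j ≤ k ∧
        v = max (val l H T j ψ) (vmax { x | ∃ i, j < i ∧ i ≤ k ∧ x = val l H T i φ }) }
  | k, .next φ => if ((k + 1 : ℕ) : ℕ∞) < l then val l H T (k + 1) φ else 0
  | k, .untl φ ψ =>
      vmax { v | ∃ j, k ≤ j ∧ (j : ℕ∞) < l ∧
        v = min (val l H T j ψ) (vmin { x | ∃ i, k ≤ i ∧ i < j ∧ x = val l H T i φ }) }
  | k, .release φ ψ =>
      vmin { v | ∃ j, k ≤ j ∧ (j : ℕ∞) < l ∧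
        v = max (val l H T j ψ) (vmax { x | ∃ i, k ≤ i ∧ i < j ∧ x = val l H T i φ }) }
  | k, .whil φ ψ =>
      vmin { v | ∃ j, k ≤ j ∧ (j : ℕ∞) < l ∧
        v = vimp (vmin { x | ∃ i, k ≤ i ∧ i < j ∧ x = val l H T i ψ }) (val l H T j φ) }

section Helpers

lemma enat_le_two_cases (x : ℕ∞) (h : x ≤ 2) : x = 0 ∨ x = 1 ∨ x = 2 := by
  lift x to ℕ using ne_top_of_le_ne_top (by decide) h
  have h' : x ≤ 2 := by exact_mod_cast h
  interval_cases x <;> simp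

lemma enat_two_le_iff (y : ℕ∞) : 2 ≤ y ↔ ¬ y ≤ 1 := by
  rw [not_le, ← ENat.add_one_le_iff (by decide : (1:ℕ∞) ≠ ⊤), one_add_one_eq_two]

lemma enat_one_le_iff (y : ℕ∞) : 1 ≤ y ↔ ¬ y ≤ 0 := by
  rw [not_le, ← ENat.add_one_le_iff (by decide : (0:ℕ∞) ≠ ⊤), zero_add]

lemma vmin_le_two (S : Set ℕ∞) : vmin S ≤ 2 := sInf_le (Set.mem_insert _ _)

lemma two_le_vmin (S : Set ℕ∞) : 2 ≤ vmin S ↔ ∀ x ∈ S, 2 ≤ x := by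
  simp [vmin, le_sInf_iff]

lemma one_le_vmin (S : Set ℕ∞) : 1 ≤ vmin S ↔ ∀ x ∈ S, 1 ≤ x := by
  simp [vmin, le_sInf_iff]

lemma two_le_vmax (S : Set ℕ∞) : 2 ≤ vmax S ↔ ∃ x ∈ S, 2 ≤ x := by
  rw [enat_two_le_iff, vmax, sSup_le_iff]
  push_neg
  constructor
  · rintro ⟨x, hx, h⟩
    rcases hx with rfl | hx
    · exact absurd h (by simp)
    · exact ⟨x, hx, (enat_two_le_iff x).2 (not_le.2 h)⟩
  · rintro ⟨x, hx, h⟩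
    exact ⟨x, Set.mem_insert_iff.2 (Or.inr hx), not_le.1 ((enat_two_le_iff x).1 h)⟩

lemma one_le_vmax (S : Set ℕ∞) : 1 ≤ vmax S ↔ ∃ x ∈ S, 1 ≤ x := by
  rw [enat_one_le_iff, vmax, sSup_le_iff]
  push_neg
  constructor
  · rintro ⟨x, hx, h⟩
    rcases hx with rfl | hx
    · exact absurd h (by simp)
    · exact ⟨x, hx, (enat_one_le_iff x).2 (not_le.2 h)⟩
  · rintro ⟨x, hx, h⟩
    exact ⟨x, Set.mem_insert_iff.2 (Or.inr hx), not_le.1 ((enat_one_le_iff x).1 h)⟩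

lemma vmax_le_two (S : Set ℕ∞) (h : ∀ x ∈ S, x ≤ 2) : vmax S ≤ 2 := by
  apply sSup_le
  rintro x (rfl | hx)
  · decide
  · exact h x hx

lemma two_le_vimp {x y : ℕ∞} (hx : x ≤ 2) : 2 ≤ vimp x y ↔ x ≤ y := by
  unfold vimp
  split_ifs with h
  · simp [h]
  · simp only [h, iff_false]
    intro h2
    exact h (hx.trans h2)

lemma one_le_vimp {x y : ℕ∞} : 1 ≤ vimp x y ↔ x ≤ y ∨ 1 ≤ y := by
  unfold vimp
  split_ifs with h <;> simp [h]

lemma vimp_le_two {x y : ℕ∞} (hy : y ≤ 2) : vimp x y ≤ 2 := by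
  unfold vimp; split_ifs <;> simp [hy]

lemma val_le_two {A : Type} (l : ℕ∞) (H T : ℕ → Set A) (φ : Formula A) :
    ∀ k : ℕ, val l H T k φ ≤ 2 := by
  induction φ with
  | atom a => intro k; simp only [val]; split_ifs <;> decide
  | falsum => intro k; simp only [val]; decide
  | verum => intro k; simp only [val]; decide
  | conj φ ψ ihφ ihψ => intro k; exact min_le_of_left_le (ihφ k)
  | disj φ ψ ihφ ihψ => intro k; exact max_le (ihφ k) (ihψ k)
  | impl φ ψ ihφ ihψ => intro k; exact vimp_le_two (ihψ k)
  | prev φ ih => intro k; simp only [val]; split_ifs; · decide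
                 · exact ih _
  | since φ ψ ihφ ihψ =>
      intro k
      apply vmax_le_two
      rintro x ⟨j, hj, rfl⟩
      exact min_le_of_left_le (ihψ j)
  | trigger φ ψ ihφ ihψ => intro k; exact vmin_le_two _
  | next φ ih => intro k; simp only [val]; split_ifs; · exact ih _
                 · decide
  | untl φ ψ ihφ ihψ =>
      intro k
      apply vmax_le_two
      rintro x ⟨j, hj, hjl, rfl⟩
      exact min_le_of_left_le (ihψ j)
  | release φ ψ ihφ ihψ => intro k; exact vmin_le_two _
  | whil φ ψ ihφ ihψ => intro k; exact vmin_le_two _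

lemma arith_impl2 {a b : ℕ∞} (ha : a ≤ 2) (hb : b ≤ 2) :
    ((2 ≤ a → 2 ≤ b) ∧ (1 ≤ a → 1 ≤ b)) ↔ a ≤ b := by
  rcases enat_le_two_cases a ha with rfl | rfl | rfl <;>
    rcases enat_le_two_cases b hb with rfl | rfl | rfl <;> decide

lemma arith_impl1 {a b : ℕ∞} (ha : a ≤ 2) (hb : b ≤ 2) :
    (1 ≤ a → 1 ≤ b) ↔ (a ≤ b ∨ 1 ≤ b) := by
  rcases enat_le_two_cases a ha with rfl | rfl | rfl <;>
    rcases enat_le_two_cases b hb with rfl | rfl | rfl <;> decide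

lemma arith_whil2 {m b : ℕ∞} (hm : m ≤ 2) (hb : b ≤ 2) :
    ((2 ≤ b ∨ ¬ 2 ≤ m) ∧ (1 ≤ b ∨ ¬ 1 ≤ m)) ↔ m ≤ b := by
  rcases enat_le_two_cases m hm with rfl | rfl | rfl <;>
    rcases enat_le_two_cases b hb with rfl | rfl | rfl <;> decide

lemma arith_whil1 {m b : ℕ∞} (hm : m ≤ 2) (hb : b ≤ 2) :
    (1 ≤ b ∨ ¬ 1 ≤ m) ↔ (m ≤ b ∨ 1 ≤ b) := by
  rcases enat_le_two_cases m hm with rfl | rfl | rfl <;>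
    rcases enat_le_two_cases b hb with rfl | rfl | rfl <;> decide

end Helpers
lemma char {A : Type} (l : ℕ∞) (H T : ℕ → Set A) (hHT : IsHT l H T) (φ : Formula A) :
    ∀ k : ℕ, (k : ℕ∞) < l →
      ((satAux l T H k φ ↔ 2 ≤ val l H T k φ) ∧ (satAux l T T k φ ↔ 1 ≤ val l H T k φ)) := by
  induction φ with
  | atom a =>
      intro k hk
      constructor <;> simp only [satAux, val] <;> split_ifs with h1 h2
      · exact iff_of_true h1 (by decide)
      · exact iff_of_false h1 (by decide)
      · exact iff_of_false h1 (by decide)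
      · exact iff_of_true (hHT k hk h1) (by decide)
      · exact iff_of_true h2 (by decide)
      · exact iff_of_false h2 (by decide)
  | falsum => intro k hk; simp [satAux, val]
  | verum => intro k hk; simp [satAux, val]
  | conj φ ψ ihφ ihψ =>
      intro k hk
      obtain ⟨h1, h2⟩ := ihφ k hk
      obtain ⟨g1, g2⟩ := ihψ k hk
      constructor <;> simp only [satAux, val, le_min_iff]
      · exact and_congr h1 g1
      · exact and_congr h2 g2
  | disj φ ψ ihφ ihψ =>
      intro k hk
      obtain ⟨h1, h2⟩ := ihφ k hk
      obtain ⟨g1, g2⟩ := ihψ k hk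
      constructor <;> simp only [satAux, val, le_max_iff]
      · exact or_congr h1 g1
      · exact or_congr h2 g2
  | impl φ ψ ihφ ihψ =>
      intro k hk
      obtain ⟨h1, h2⟩ := ihφ k hk
      obtain ⟨g1, g2⟩ := ihψ k hk
      have haφ := val_le_two l H T φ k
      have haψ := val_le_two l H T ψ k
      constructor <;> simp only [satAux, val]
      · rw [two_le_vimp haφ, ← arith_impl2 haφ haψ]
        exact and_congr (imp_congr h1 g1) (imp_congr h2 g2)
      · rw [one_le_vimp, ← arith_impl1 haφ haψ]
        rw [and_self_iff]
        exact imp_congr h2 g2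
  | prev φ ih =>
      intro k hk
      match k with
      | 0 => simp [satAux, val]
      | k + 1 =>
        have hk' : ((k : ℕ) : ℕ∞) < l :=
          lt_of_le_of_lt (by exact_mod_cast Nat.le_succ k) hk
        obtain ⟨h1, h2⟩ := ih k hk'
        simp only [satAux, val, Nat.succ_ne_zero, if_false, Nat.add_sub_cancel]
        exact ⟨by simpa using h1, by simpa using h2⟩
  | since φ ψ ihφ ihψ =>
      intro k hk
      have hjl : ∀ j : ℕ, j ≤ k → (j : ℕ∞) < l := fun j hj =>
        lt_of_le_of_lt (by exact_mod_cast hj) hk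
      constructor <;> simp only [satAux, val]
      · rw [two_le_vmax]
        constructor
        · rintro ⟨j, hj, hψ, hφ⟩
          refine ⟨_, ⟨j, hj, rfl⟩, ?_⟩
          rw [le_min_iff, two_le_vmin]
          exact ⟨(ihψ j (hjl j hj)).1.mp hψ,
            by rintro x ⟨i, h1, h2, rfl⟩; exact (ihφ i (hjl i h2)).1.mp (hφ i h1 h2)⟩
        · rintro ⟨v, ⟨j, hj, rfl⟩, hv⟩
          rw [le_min_iff, two_le_vmin] at hv
          exact ⟨j, hj, (ihψ j (hjl j hj)).1.mpr hv.1,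
            fun i h1 h2 => (ihφ i (hjl i h2)).1.mpr (hv.2 _ ⟨i, h1, h2, rfl⟩)⟩
      · rw [one_le_vmax]
        constructor
        · rintro ⟨j, hj, hψ, hφ⟩
          refine ⟨_, ⟨j, hj, rfl⟩, ?_⟩
          rw [le_min_iff, one_le_vmin]
          exact ⟨(ihψ j (hjl j hj)).2.mp hψ,
            by rintro x ⟨i, h1, h2, rfl⟩; exact (ihφ i (hjl i h2)).2.mp (hφ i h1 h2)⟩
        · rintro ⟨v, ⟨j, hj, rfl⟩, hv⟩
          rw [le_min_iff, one_le_vmin] at hv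
          exact ⟨j, hj, (ihψ j (hjl j hj)).2.mpr hv.1,
            fun i h1 h2 => (ihφ i (hjl i h2)).2.mpr (hv.2 _ ⟨i, h1, h2, rfl⟩)⟩
  | trigger φ ψ ihφ ihψ =>
      intro k hk
      have hjl : ∀ j : ℕ, j ≤ k → (j : ℕ∞) < l := fun j hj =>
        lt_of_le_of_lt (by exact_mod_cast hj) hk
      constructor <;> simp only [satAux, val]
      · rw [two_le_vmin]
        constructor
        · rintro h v ⟨j, hj, rfl⟩
          rw [le_max_iff]
          rcases h j hj with hψ | ⟨i, h1, h2, hφ⟩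
          · exact Or.inl ((ihψ j (hjl j hj)).1.mp hψ)
          · exact Or.inr ((two_le_vmax _).2 ⟨_, ⟨i, h1, h2, rfl⟩,
              (ihφ i (hjl i h2)).1.mp hφ⟩)
        · intro h j hj
          have := h _ ⟨j, hj, rfl⟩
          rw [le_max_iff] at this
          rcases this with hψ | hφ
          · exact Or.inl ((ihψ j (hjl j hj)).1.mpr hψ)
          · obtain ⟨x, ⟨i, h1, h2, rfl⟩, hx⟩ := (two_le_vmax _).1 hφ
            exact Or.inr ⟨i, h1, h2, (ihφ i (hjl i h2)).1.mpr hx⟩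
      · rw [one_le_vmin]
        constructor
        · rintro h v ⟨j, hj, rfl⟩
          rw [le_max_iff]
          rcases h j hj with hψ | ⟨i, h1, h2, hφ⟩
          · exact Or.inl ((ihψ j (hjl j hj)).2.mp hψ)
          · exact Or.inr ((one_le_vmax _).2 ⟨_, ⟨i, h1, h2, rfl⟩,
              (ihφ i (hjl i h2)).2.mp hφ⟩)
        · intro h j hj
          have := h _ ⟨j, hj, rfl⟩
          rw [le_max_iff] at this
          rcases this with hψ | hφ
          · exact Or.inl ((ihψ j (hjl j hj)).2.mpr hψ)
          · obtain ⟨x, ⟨i, h1, h2, rfl⟩, hx⟩ := (one_le_vmax _).1 hφ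
            exact Or.inr ⟨i, h1, h2, (ihφ i (hjl i h2)).2.mpr hx⟩
  | next φ ih =>
      intro k hk
      constructor <;> simp only [satAux, val] <;> split_ifs with h
      · rw [(ih (k+1) h).1]; exact and_iff_right h
      · simp only [h, false_and, false_iff]; decide
      · rw [(ih (k+1) h).2]; exact and_iff_right h
      · simp only [h, false_and, false_iff]; decide
  | untl φ ψ ihφ ihψ =>
      intro k hk
      have hil : ∀ i j : ℕ, i < j → (j : ℕ∞) < l → (i : ℕ∞) < l := fun i j hij hj =>
        lt_of_le_of_lt (by exact_mod_cast hij.le) hj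
      constructor <;> simp only [satAux, val]
      · rw [two_le_vmax]
        constructor
        · rintro ⟨j, hj, hjl, hψ, hφ⟩
          refine ⟨_, ⟨j, hj, hjl, rfl⟩, ?_⟩
          rw [le_min_iff, two_le_vmin]
          exact ⟨(ihψ j hjl).1.mp hψ,
            by rintro x ⟨i, h1, h2, rfl⟩; exact (ihφ i (hil i j h2 hjl)).1.mp (hφ i h1 h2)⟩
        · rintro ⟨v, ⟨j, hj, hjl, rfl⟩, hv⟩
          rw [le_min_iff, two_le_vmin] at hv
          exact ⟨j, hj, hjl, (ihψ j hjl).1.mpr hv.1,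
            fun i h1 h2 => (ihφ i (hil i j h2 hjl)).1.mpr (hv.2 _ ⟨i, h1, h2, rfl⟩)⟩
      · rw [one_le_vmax]
        constructor
        · rintro ⟨j, hj, hjl, hψ, hφ⟩
          refine ⟨_, ⟨j, hj, hjl, rfl⟩, ?_⟩
          rw [le_min_iff, one_le_vmin]
          exact ⟨(ihψ j hjl).2.mp hψ,
            by rintro x ⟨i, h1, h2, rfl⟩; exact (ihφ i (hil i j h2 hjl)).2.mp (hφ i h1 h2)⟩
        · rintro ⟨v, ⟨j, hj, hjl, rfl⟩, hv⟩
          rw [le_min_iff, one_le_vmin] at hv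
          exact ⟨j, hj, hjl, (ihψ j hjl).2.mpr hv.1,
            fun i h1 h2 => (ihφ i (hil i j h2 hjl)).2.mpr (hv.2 _ ⟨i, h1, h2, rfl⟩)⟩
  | release φ ψ ihφ ihψ =>
      intro k hk
      have hil : ∀ i j : ℕ, i < j → (j : ℕ∞) < l → (i : ℕ∞) < l := fun i j hij hj =>
        lt_of_le_of_lt (by exact_mod_cast hij.le) hj
      constructor <;> simp only [satAux, val]
      · rw [two_le_vmin]
        constructor
        · rintro h v ⟨j, hj, hjl, rfl⟩
          rw [le_max_iff]
          rcases h j hj hjl with hψ | ⟨i, h1, h2, hφ⟩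
          · exact Or.inl ((ihψ j hjl).1.mp hψ)
          · exact Or.inr ((two_le_vmax _).2 ⟨_, ⟨i, h1, h2, rfl⟩,
              (ihφ i (hil i j h2 hjl)).1.mp hφ⟩)
        · intro h j hj hjl
          have := h _ ⟨j, hj, hjl, rfl⟩
          rw [le_max_iff] at this
          rcases this with hψ | hφ
          · exact Or.inl ((ihψ j hjl).1.mpr hψ)
          · obtain ⟨x, ⟨i, h1, h2, rfl⟩, hx⟩ := (two_le_vmax _).1 hφ
            exact Or.inr ⟨i, h1, h2, (ihφ i (hil i j h2 hjl)).1.mpr hx⟩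
      · rw [one_le_vmin]
        constructor
        · rintro h v ⟨j, hj, hjl, rfl⟩
          rw [le_max_iff]
          rcases h j hj hjl with hψ | ⟨i, h1, h2, hφ⟩
          · exact Or.inl ((ihψ j hjl).2.mp hψ)
          · exact Or.inr ((one_le_vmax _).2 ⟨_, ⟨i, h1, h2, rfl⟩,
              (ihφ i (hil i j h2 hjl)).2.mp hφ⟩)
        · intro h j hj hjl
          have := h _ ⟨j, hj, hjl, rfl⟩
          rw [le_max_iff] at this
          rcases this with hψ | hφ
          · exact Or.inl ((ihψ j hjl).2.mpr hψ)
          · obtain ⟨x, ⟨i, h1, h2, rfl⟩, hx⟩ := (one_le_vmax _).1 hφ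
            exact Or.inr ⟨i, h1, h2, (ihφ i (hil i j h2 hjl)).2.mpr hx⟩
  | whil φ ψ ihφ ihψ =>
      intro k hk
      have hil : ∀ i j : ℕ, i < j → (j : ℕ∞) < l → (i : ℕ∞) < l := fun i j hij hj =>
        lt_of_le_of_lt (by exact_mod_cast hij.le) hj
      -- pointwise equivalences
      have key : ∀ j : ℕ, (j : ℕ∞) < l →
          ((satAux l T H j φ ∨ ∃ i, k ≤ i ∧ i < j ∧ ¬ satAux l T H i ψ) ↔
            (2 ≤ val l H T j φ ∨
              ¬ 2 ≤ vmin { x | ∃ i, k ≤ i ∧ i < j ∧ x = val l H T i ψ })) := by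
        intro j hjl
        rw [two_le_vmin]
        push_neg
        constructor
        · rintro (hφ | ⟨i, h1, h2, hψ⟩)
          · exact Or.inl ((ihφ j hjl).1.mp hφ)
          · exact Or.inr ⟨_, ⟨i, h1, h2, rfl⟩,
              not_le.mp (fun hx => hψ ((ihψ i (hil i j h2 hjl)).1.mpr hx))⟩
        · rintro (hφ | ⟨x, ⟨i, h1, h2, rfl⟩, hx⟩)
          · exact Or.inl ((ihφ j hjl).1.mpr hφ)
          · exact Or.inr ⟨i, h1, h2,
              fun hs => absurd ((ihψ i (hil i j h2 hjl)).1.mp hs) (not_le.mpr hx)⟩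
      have keyT : ∀ j : ℕ, (j : ℕ∞) < l →
          ((satAux l T T j φ ∨ ∃ i, k ≤ i ∧ i < j ∧ ¬ satAux l T T i ψ) ↔
            (1 ≤ val l H T j φ ∨
              ¬ 1 ≤ vmin { x | ∃ i, k ≤ i ∧ i < j ∧ x = val l H T i ψ })) := by
        intro j hjl
        rw [one_le_vmin]
        push_neg
        constructor
        · rintro (hφ | ⟨i, h1, h2, hψ⟩)
          · exact Or.inl ((ihφ j hjl).2.mp hφ)
          · exact Or.inr ⟨_, ⟨i, h1, h2, rfl⟩,
              not_le.mp (fun hx => hψ ((ihψ i (hil i j h2 hjl)).2.mpr hx))⟩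
        · rintro (hφ | ⟨x, ⟨i, h1, h2, rfl⟩, hx⟩)
          · exact Or.inl ((ihφ j hjl).2.mpr hφ)
          · exact Or.inr ⟨i, h1, h2,
              fun hs => absurd ((ihψ i (hil i j h2 hjl)).2.mp hs) (not_le.mpr hx)⟩
      constructor <;> simp only [satAux, val]
      · rw [two_le_vmin]
        constructor
        · rintro ⟨hH, hT⟩ v ⟨j, hj, hjl, rfl⟩
          rw [two_le_vimp (vmin_le_two _), ← arith_whil2 (vmin_le_two _) (val_le_two l H T φ j)]
          exact ⟨(key j hjl).1 (hH j hj hjl), ((keyT j hjl).1 (hT j hj hjl)).imp_left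
            (fun h2 => le_trans (by decide) h2)⟩
        · intro h
          constructor
          · intro j hj hjl
            have := h _ ⟨j, hj, hjl, rfl⟩
            rw [two_le_vimp (vmin_le_two _),
              ← arith_whil2 (vmin_le_two _) (val_le_two l H T φ j)] at this
            exact (key j hjl).2 this.1
          · intro j hj hjl
            have := h _ ⟨j, hj, hjl, rfl⟩
            rw [two_le_vimp (vmin_le_two _),
              ← arith_whil2 (vmin_le_two _) (val_le_two l H T φ j)] at this
            exact (keyT j hjl).2 this.2
      · rw [one_le_vmin]
        constructor
        · rintro ⟨hH, _⟩ v ⟨j, hj, hjl, rfl⟩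
          rw [one_le_vimp, ← arith_whil1 (vmin_le_two _) (val_le_two l H T φ j)]
          exact (keyT j hjl).1 (hH j hj hjl)
        · intro h
          have h' : ∀ j, k ≤ j → (j : ℕ∞) < l →
              satAux l T T j φ ∨ ∃ i, k ≤ i ∧ i < j ∧ ¬ satAux l T T i ψ := by
            intro j hj hjl
            have := h _ ⟨j, hj, hjl, rfl⟩
            rw [one_le_vimp, ← arith_whil1 (vmin_le_two _) (val_le_two l H T φ j)] at this
            exact (keyT j hjl).2 this
          exact ⟨h', h'⟩

/-- Three-valued characterization of THT: `⟨H,T⟩,k ⊨ φ` iff `m_k(φ) = 2`, and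
`⟨T,T⟩,k ⊨ φ` iff `m_k(φ) ≠ 0`. -/
theorem three_valued_characterization {A : Type} (l : ℕ∞) (H T : ℕ → Set A)
    (hHT : IsHT l H T) (φ : Formula A) (k : ℕ) (hk : (k : ℕ∞) < l) :
    (Sat l H T k φ ↔ val l H T k φ = 2) ∧ (Sat l T T k φ ↔ val l H T k φ ≠ 0) := by
  obtain ⟨h1, h2⟩ := char l H T hHT φ k hk
  constructor
  · exact h1.trans ⟨fun h => le_antisymm (val_le_two l H T φ k) h, fun h => h.ge⟩
  · exact h2.trans ENat.one_le_iff_ne_zero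
end

section
/- Let 𝒜 = {a_1,…,a_n} be a finite alphabet, 𝒜* := 𝒜 ∪ {a' : a∈𝒜}, and define the formulas ⟨a'⟩≤⟨a⟩ := ⋀_{i=1}^n ☐(a_i'→a_i) and ⟨a'⟩<⟨a⟩ := (⟨a'⟩≤⟨a⟩) ∧ ⋁_{i=1}^n ◇(¬a_i' ∧ a_i). Let T* be a trace over 𝒜*, and define traces H and T over 𝒜 of the same length by H_i := {a∈𝒜 : a'∈T*_i} and T_i := T*_i ∩ 𝒜. Then: (1) T*,0 ⊨ ⟨a'⟩≤⟨a⟩ in LTL iff H ≤ T; (2) T*,0 ⊨ ⟨a'⟩<⟨a⟩ in LTL iff H < T. -/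
/-- Finite conjunction of a list of formulas. -/
def bigAnd {B : Type} (L : List (Formula B)) : Formula B := L.foldr .conj .verum

/-- Finite disjunction of a list of formulas. -/
def bigOr {B : Type} (L : List (Formula B)) : Formula B := L.foldr .disj .falsum

variable (A : Type) [Fintype A]

/-- The formula `⟨a'⟩ ≤ ⟨a⟩ := ⋀_{a∈𝒜} ☐(a' → a)` over the extended alphabet
`𝒜* = 𝒜 ⊕ 𝒜` (`Sum.inl a` is `a`, `Sum.inr a` is the primed copy `a'`). -/
noncomputable def leFormula : Formula (A ⊕ A) :=
  bigAnd ((Finset.univ : Finset A).toList.map fun a =>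
    Formula.always (.impl (.atom (.inr a)) (.atom (.inl a))))

/-- The formula `⟨a'⟩ < ⟨a⟩ := (⟨a'⟩ ≤ ⟨a⟩) ∧ ⋁_{a∈𝒜} ◇(¬a' ∧ a)`. -/
noncomputable def ltFormula : Formula (A ⊕ A) :=
  .conj (leFormula A)
    (bigOr ((Finset.univ : Finset A).toList.map fun a =>
      Formula.ev (.conj (Formula.neg (.atom (.inr a))) (.atom (.inl a)))))

lemma satAux_bigAnd {B : Type} (l : ℕ∞) (T H : ℕ → Set B) (k : ℕ) (L : List (Formula B)) :
    satAux l T H k (bigAnd L) ↔ ∀ φ ∈ L, satAux l T H k φ := by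
  induction L with
  | nil => simp [bigAnd, satAux]
  | cons φ L ih => simp [bigAnd, satAux] at ih ⊢; tauto

lemma satAux_bigOr {B : Type} (l : ℕ∞) (T H : ℕ → Set B) (k : ℕ) (L : List (Formula B)) :
    satAux l T H k (bigOr L) ↔ ∃ φ ∈ L, satAux l T H k φ := by
  induction L with
  | nil => simp [bigOr, satAux]
  | cons φ L ih =>
    simp only [bigOr, List.foldr, satAux, List.mem_cons] at ih ⊢
    rw [ih]
    constructor
    · rintro (h | ⟨ψ, hψ, h⟩)
      · exact ⟨φ, Or.inl rfl, h⟩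
      · exact ⟨ψ, Or.inr hψ, h⟩
    · rintro ⟨ψ, (rfl | hψ), h⟩
      · exact Or.inl h
      · exact Or.inr ⟨ψ, hψ, h⟩

/-- For a trace `T*` over `𝒜*` with associated traces `H_i = {a : a' ∈ T*_i}` and
`T_i = T*_i ∩ 𝒜`: (1) `T*,0 ⊨ ⟨a'⟩≤⟨a⟩` iff `H ≤ T`; (2) `T*,0 ⊨ ⟨a'⟩<⟨a⟩` iff `H < T`. -/
theorem le_lt_formula_correct (l : ℕ∞) (Tstar : ℕ → Set (A ⊕ A)) :
    (Sat l Tstar Tstar 0 (leFormula A) ↔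
        TraceLe l (fun i => {a : A | Sum.inr a ∈ Tstar i}) (fun i => {a : A | Sum.inl a ∈ Tstar i}))
    ∧ (Sat l Tstar Tstar 0 (ltFormula A) ↔
        TraceLt l (fun i => {a : A | Sum.inr a ∈ Tstar i}) (fun i => {a : A | Sum.inl a ∈ Tstar i})) := by
  have hle : Sat l Tstar Tstar 0 (leFormula A) ↔
      TraceLe l (fun i => {a : A | Sum.inr a ∈ Tstar i})
        (fun i => {a : A | Sum.inl a ∈ Tstar i}) := by
    rw [Sat, leFormula, satAux_bigAnd]
    simp only [List.mem_map, Finset.mem_toList, Finset.mem_univ, true_and]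
    constructor
    · intro h i hi a ha
      have := h _ ⟨a, rfl⟩
      simp only [Formula.always, satAux] at this
      have := this i (Nat.zero_le _) hi
      rcases this with h' | ⟨_, _, _, h'⟩
      · exact h'.1 ha
      · exact h'.elim
    · intro h φ hφ
      obtain ⟨a, rfl⟩ := hφ
      simp only [Formula.always, satAux]
      intro j _ hj
      exact Or.inl ⟨fun ha => h j hj ha, fun ha => h j hj ha⟩
  refine ⟨hle, ?_⟩
  rw [Sat, ltFormula]
  show (satAux _ _ _ _ _ ∧ _) ↔ _
  rw [← Sat, hle, satAux_bigOr, TraceLt]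
  simp only [List.mem_map, Finset.mem_toList, Finset.mem_univ, true_and]
  constructor
  · rintro ⟨hL, φ, ⟨a, rfl⟩, hφ⟩
    refine ⟨hL, fun heq => ?_⟩
    simp only [Formula.ev, Formula.neg, satAux] at hφ
    obtain ⟨j, -, hj, ⟨⟨hna, -⟩, ha⟩, -⟩ := hφ
    have := (Set.ext_iff.mp (heq j hj) a).mpr ha
    exact hna this
  · rintro ⟨hL, hne⟩
    refine ⟨hL, ?_⟩
    have : ∃ i : ℕ, (i : ℕ∞) < l ∧ ∃ a : A, Sum.inl a ∈ Tstar i ∧ Sum.inr a ∉ Tstar i := by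
      by_contra hc
      push_neg at hc
      apply hne
      intro i hi
      ext a
      exact ⟨fun ha => hL i hi ha, fun ha => by
        by_contra hna
        exact hna (absurd (hc i hi a ha) (by tauto))⟩
    obtain ⟨i, hi, a, ha, hna⟩ := this
    refine ⟨_, ⟨a, rfl⟩, ?_⟩
    simp only [Formula.ev, Formula.neg, satAux]
    exact ⟨i, Nat.zero_le _, hi, ⟨⟨fun h => hna h, fun h => hna h⟩, ha⟩, fun _ _ _ => trivial⟩
end

section
/- Definability of eventually: for any atom p, the formulas ◇p and ((☐(p→☐(p∨¬p)) ∧ ☐(○☐(p∨¬p) → p∨¬p∨○☐¬p)) → (☐(p∨¬p) ∧ ¬☐¬p)) are THT-equivalent, i.e., they are satisfied by exactly the same HT-traces at the same time points, over traces of any length (finite or infinite). -/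
/-- Definability of eventually: `◇p` is THT-equivalent to
`((☐(p→☐(p∨¬p)) ∧ ☐(○☐(p∨¬p) → p∨¬p∨○☐¬p)) → (☐(p∨¬p) ∧ ¬☐¬p))`. -/
theorem eventually_definable {A : Type} (p : A) :
    ThtEquiv (Formula.ev (.atom p))
      (.impl
        (.conj
          (Formula.always (.impl (.atom p)
            (Formula.always (.disj (.atom p) (Formula.neg (.atom p))))))
          (Formula.always (.impl
            (.next (Formula.always (.disj (.atom p) (Formula.neg (.atom p)))))
            (.disj (.disj (.atom p) (Formula.neg (.atom p)))
              (.next (Formula.always (Formula.neg (.atom p))))))))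
        (.conj (Formula.always (.disj (.atom p) (Formula.neg (.atom p))))
          (Formula.neg (Formula.always (Formula.neg (.atom p)))))) := by
  intro l H T hHT k hk
  simp [Sat, satAux, Formula.ev, Formula.always, Formula.neg, -not_and, imp_false,
    not_or, or_not, not_and_self_iff, and_not_self_iff]
  constructor
  · rintro ⟨j0, hkj, hjl, hp⟩
    have hpT : p ∈ T j0 := hHT j0 hjl hp
    refine ⟨?_, j0, hkj, hjl, hpT⟩
    intro hA hB
    have key : ∀ d j, j + d = j0 → k ≤ j →
        ∀ i, j ≤ i → (i : ℕ∞) < l → p ∈ H i ∨ p ∉ H i ∧ p ∉ T i := by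
      intro d
      induction d with
      | zero =>
          intro j hj hkj'
          simp only [Nat.add_zero] at hj
          subst hj
          exact hA j hkj' hjl hp
      | succ d ih =>
          intro j hj hkj'
          have hj1 : j + 1 + d = j0 := by omega
          have ih' := ih (j + 1) hj1 (le_trans hkj' (Nat.le_succ j))
          have hjj0 : j + 1 ≤ j0 := by omega
          have hj1l : ((j + 1 : ℕ) : ℕ∞) < l :=
            lt_of_le_of_lt (Nat.cast_le.mpr hjj0) hjl
          have hj1l' : (j : ℕ∞) + 1 < l := by exact_mod_cast hj1l
          have hjll : (j : ℕ∞) < l :=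
            lt_of_le_of_lt (Nat.cast_le.mpr (by omega : j ≤ j0)) hjl
          rcases hB j hkj' hjll hj1l' ih' with hdisj | ⟨_, hall⟩
          · intro i hji hil
            rcases Nat.eq_or_lt_of_le hji with rfl | hlt
            · exact hdisj
            · exact ih' i hlt hil
          · exact absurd hpT (hall j0 hjj0 hjl).2
    have allfact : ∀ i, k ≤ i → (i : ℕ∞) < l → p ∈ H i ∨ p ∉ H i ∧ p ∉ T i := by
      have : k + (j0 - k) = j0 := by omega
      exact key (j0 - k) k this le_rfl
    exact ⟨allfact, ⟨j0, hkj, hjl, by simp [hp]⟩, j0, hkj, hjl, hpT⟩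
  · rintro ⟨himp, j0, hkj, hjl, hpT⟩
    by_contra hno
    push_neg at hno
    have hA : ∀ j, k ≤ j → (j : ℕ∞) < l → p ∈ H j →
        ∀ i, j ≤ i → (i : ℕ∞) < l → p ∈ H i ∨ p ∉ H i ∧ p ∉ T i := by
      intro j hkj' hjl' hp
      exact absurd hp (hno j hkj' hjl')
    have hB : ∀ j, k ≤ j → (j : ℕ∞) < l → (j : ℕ∞) + 1 < l →
        (∀ i, j + 1 ≤ i → (i : ℕ∞) < l → p ∈ H i ∨ p ∉ H i ∧ p ∉ T i) →
        (p ∈ H j ∨ p ∉ H j ∧ p ∉ T j) ∨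
          (j : ℕ∞) + 1 < l ∧ ∀ i, j + 1 ≤ i → (i : ℕ∞) < l → p ∉ H i ∧ p ∉ T i := by
      intro j hkj' hjl' hj1l hall
      right
      refine ⟨hj1l, fun i hi hil => ?_⟩
      rcases hall i hi hil with h | h
      · exact absurd h (hno i (by omega) hil)
      · exact h
    obtain ⟨hall, -, -⟩ := himp hA hB
    rcases hall j0 hkj hjl with h | h
    · exact absurd h (hno j0 hkj hjl)
    · exact absurd hpT h.2
end

section
/- Bounded translation correctness: let P be a temporal logic program over 𝒜 with initial part P_I, dynamic part P_D and final part P_F, let λ∈ℕ with λ≥1, and let τ_λ(P) be the regular (non-temporal) disjunctive program over the stamped atoms {a_i : a∈𝒜, 0≤i<λ} defined by τ_λ(P) := {τ_0(r) : r∈P_I} ∪ {τ_k(r) : r∈P_D, 1≤k<λ} ∪ {τ_{λ−1}(r) : r∈P_F}, where for a rule r = (b_1∧…∧b_n → a_1∨…∨a_m), τ_k(r) := (τ_k(b_1)∧…∧τ_k(b_n) → τ_k(a_1)∨…∨τ_k(a_m)) with τ_k(a)=a_k, τ_k(¬a)=¬a_k, τ_k(●a)=a_{k−1}, τ_k(¬●a)=¬a_{k−1}.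 Let T=(T_i)_{i<λ} be a trace of length λ and X the set of stamped atoms with a_i∈X iff a∈T_i. Then T is a temporal stable model of P (viewed as a temporal theory) if and only if X is a stable model of τ_λ(P). -/
/-- Temporal literals: `a`, `¬a`, `●a`, `¬●a`. -/
inductive TLit (A : Type) : Type
  | pos (a : A)
  | neg (a : A)
  | ppos (a : A)
  | pneg (a : A)

/-- A temporal literal as a temporal formula. -/
def TLit.toFormula {A : Type} : TLit A → Formula A
  | .pos a => .atom a
  | .neg a => Formula.neg (.atom a)
  | .ppos a => .prev (.atom a)
  | .pneg a => Formula.neg (.prev (.atom a))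

/-- Regular literals are `a` and `¬a`. -/
def TLit.Regular {A : Type} : TLit A → Prop
  | .pos _ => True
  | .neg _ => True
  | .ppos _ => False
  | .pneg _ => False

/-- A temporal rule `b₁ ∧ … ∧ bₙ → a₁ ∨ … ∨ aₘ` given by its body and head literals. -/
structure TRule (A : Type) : Type where
  body : List (TLit A)
  head : List (TLit A)

/-- A rule is regular if all its literals are regular. -/
def TRule.Regular {A : Type} (r : TRule A) : Prop :=
  (∀ b ∈ r.body, b.Regular) ∧ (∀ a ∈ r.head, a.Regular)

/-- The implication `B → A` of a rule. -/
def TRule.toFormula {A : Type} (r : TRule A) : Formula A :=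
  .impl (bigAnd (r.body.map TLit.toFormula)) (bigOr (r.head.map TLit.toFormula))

/-- The temporal theory of a program with initial part `PI` (rules `B → A`),
dynamic part `PD` (rules `○̂☐(B → A)`) and final part `PF` (rules `☐(F → (B → A))`). -/
def progTheory {A : Type} (PI PD PF : Set (TRule A)) : Set (Formula A) :=
  (TRule.toFormula '' PI)
    ∪ ((fun r : TRule A => Formula.wnext (Formula.always r.toFormula)) '' PD)
    ∪ ((fun r : TRule A => Formula.always (.impl Formula.final r.toFormula)) '' PF)

/-- Propositional formulas over a set `V` of atoms. -/
inductive PForm (V : Type) : Type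
  | atom (v : V)
  | falsum
  | verum
  | conj (f g : PForm V)
  | disj (f g : PForm V)
  | impl (f g : PForm V)

/-- Propositional here-and-there satisfaction `(X,Y) ⊨ f`. -/
def psatAux {V : Type} (Y : Set V) : Set V → PForm V → Prop
  | X, .atom v => v ∈ X
  | _, .falsum => False
  | _, .verum => True
  | X, .conj f g => psatAux Y X f ∧ psatAux Y X g
  | X, .disj f g => psatAux Y X f ∨ psatAux Y X g
  | X, .impl f g => (psatAux Y X f → psatAux Y X g) ∧ (psatAux Y Y f → psatAux Y Y g)

/-- Propositional here-and-there satisfaction `(X,Y) ⊨ f`. -/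
def PSat {V : Type} (X Y : Set V) (f : PForm V) : Prop := psatAux Y X f

/-- `Y` is a stable model of the propositional program `Π`. -/
def StableModel {V : Type} (Y : Set V) (Pi : Set (PForm V)) : Prop :=
  (∀ f ∈ Pi, PSat Y Y f)
    ∧ ∀ X : Set V, X ⊆ Y → X ≠ Y → ¬ (∀ f ∈ Pi, PSat X Y f)

/-- Propositional negation. -/
def PForm.pneg {V : Type} (f : PForm V) : PForm V := .impl f .falsum

/-- Translation of a temporal literal at time point `k` into a stamped literal. -/
def tauLit {A : Type} (k : ℕ) : TLit A → PForm (A × ℕ)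
  | .pos a => .atom (a, k)
  | .neg a => PForm.pneg (.atom (a, k))
  | .ppos a => .atom (a, k - 1)
  | .pneg a => PForm.pneg (.atom (a, k - 1))

/-- Translation of a temporal rule at time point `k`. -/
def tauRule {A : Type} (k : ℕ) (r : TRule A) : PForm (A × ℕ) :=
  .impl ((r.body.map (tauLit k)).foldr .conj .verum)
        ((r.head.map (tauLit k)).foldr .disj .falsum)

/-- The bounded translation `τ_λ(P)` of the program `P = (PI, PD, PF)`. -/
def tauProg {A : Type} (lam : ℕ) (PI PD PF : Set (TRule A)) : Set (PForm (A × ℕ)) :=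
  (tauRule 0 '' PI)
    ∪ { f | ∃ r ∈ PD, ∃ k : ℕ, 1 ≤ k ∧ k < lam ∧ f = tauRule k r }
    ∪ (tauRule (lam - 1) '' PF)

/-!
Only the truth of rules at the time points `0, …, λ-1` matters: an initial rule is evaluated
at `0`, `○̂☐` makes a dynamic rule hold at every `k ≥ 1`, and `☐(F → ·)` restricts a final
rule to the last point `λ - 1`. At each such point `k`, THT satisfaction of a rule by `⟨H, T⟩`
is exactly HT satisfaction of `τ_k(r)` by the stamped sets of `H` and `T`, because literals of
the form `●a` only occur where `k ≥ 1`. So `⟨H, T⟩ ⊨ P` iff `(stamp H, stamp T) ⊨ τ_λ(P)`,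
and since `stamp` is an order isomorphism between traces of length `λ` below `T` and subsets of
`stamp T`, the minimality conditions in the two notions of stability correspond.
-/

namespace BoundedTranslation

variable {A : Type}

def stamp (lam : ℕ) (H : ℕ → Set A) : Set (A × ℕ) :=
  {p | p.2 < lam ∧ p.1 ∈ H p.2}

def unstamp (X : Set (A × ℕ)) : ℕ → Set A :=
  fun i => {a | (a, i) ∈ X}

lemma stamp_unstamp {lam : ℕ} {T : ℕ → Set A} {X : Set (A × ℕ)} (hX : X ⊆ stamp lam T) :
    stamp lam (unstamp X) = X := by
  ext ⟨a, i⟩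
  exact ⟨And.right, fun h => ⟨(hX h).1, h⟩⟩

lemma stamp_subset_stamp_iff {lam : ℕ} {H T : ℕ → Set A} :
    stamp lam H ⊆ stamp lam T ↔ TraceLe lam H T := by
  simp only [stamp, TraceLe, Prod.forall, Nat.cast_lt, Set.subset_def]
  exact ⟨fun h i hi a ha => (h a i ⟨hi, ha⟩).2, fun h a i hai => ⟨hai.1, h i hai.1 a hai.2⟩⟩

lemma stamp_eq_stamp_iff {lam : ℕ} {H T : ℕ → Set A} :
    stamp lam H = stamp lam T ↔ TraceEq lam H T := by
  rw [Set.Subset.antisymm_iff, stamp_subset_stamp_iff, stamp_subset_stamp_iff]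
  simp only [TraceLe, TraceEq, Set.Subset.antisymm_iff]
  exact ⟨fun h i hi => ⟨h.1 i hi, h.2 i hi⟩, fun h => ⟨fun i hi => (h i hi).1, fun i hi => (h i hi).2⟩⟩

lemma traceLt_iff_stamp_ssubset {lam : ℕ} {H T : ℕ → Set A} :
    TraceLt lam H T ↔ stamp lam H ⊆ stamp lam T ∧ stamp lam H ≠ stamp lam T := by
  rw [TraceLt, stamp_subset_stamp_iff, Ne, stamp_eq_stamp_iff]

lemma sat_bigAnd {l : ℕ∞} {H T : ℕ → Set A} {k : ℕ} {L : List (Formula A)} :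
    Sat l H T k (bigAnd L) ↔ ∀ φ ∈ L, Sat l H T k φ := by
  induction L with
  | nil => simp [bigAnd, Sat, satAux]
  | cons φ L ih => simp_all [bigAnd, Sat, satAux]

lemma sat_bigOr {l : ℕ∞} {H T : ℕ → Set A} {k : ℕ} {L : List (Formula A)} :
    Sat l H T k (bigOr L) ↔ ∃ φ ∈ L, Sat l H T k φ := by
  induction L with
  | nil => simp [bigOr, Sat, satAux]
  | cons φ L ih => simp_all [bigOr, Sat, satAux]

lemma psat_foldr_conj {V : Type} {X Y : Set V} {L : List (PForm V)} :
    PSat X Y (L.foldr .conj .verum) ↔ ∀ f ∈ L, PSat X Y f := by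
  induction L with
  | nil => simp [PSat, psatAux]
  | cons f L ih => simp_all [PSat, psatAux]

lemma psat_foldr_disj {V : Type} {X Y : Set V} {L : List (PForm V)} :
    PSat X Y (L.foldr .disj .falsum) ↔ ∃ f ∈ L, PSat X Y f := by
  induction L with
  | nil => simp [PSat, psatAux]
  | cons f L ih => simp_all [PSat, psatAux]

/-- At `k = 0`, truncated subtraction makes `tauLit` send `●a` to `a_0`, hence `0 < k` for
non-regular literals. -/
lemma sat_toFormula_iff_psat_tauLit {lam k : ℕ} (hk : k < lam) (H T : ℕ → Set A)
    {b : TLit A} (hb : b.Regular ∨ 0 < k) :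
    Sat lam H T k b.toFormula ↔ PSat (stamp lam H) (stamp lam T) (tauLit k b) := by
  have hprev : ¬ b.Regular → 0 < k ∧ k - 1 < lam := fun h => ⟨hb.resolve_left h, by omega⟩
  cases b <;>
    simp_all [TLit.Regular, TLit.toFormula, tauLit, Formula.neg, PForm.pneg, Sat, satAux, PSat,
      psatAux, stamp]

lemma sat_toFormula_iff_psat_tauRule {lam k : ℕ} (hk : k < lam) (H T : ℕ → Set A)
    {r : TRule A} (hr : r.Regular ∨ 0 < k) :
    Sat lam H T k r.toFormula ↔ PSat (stamp lam H) (stamp lam T) (tauRule k r) := by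
  have lit {H' : ℕ → Set A} {b : TLit A} (hmem : b ∈ r.body ∨ b ∈ r.head) :
      Sat lam H' T k b.toFormula ↔ PSat (stamp lam H') (stamp lam T) (tauLit k b) :=
    sat_toFormula_iff_psat_tauLit hk H' T <| hr.imp (fun h => hmem.elim (h.1 b) (h.2 b)) id
  have rule (H' : ℕ → Set A) :
      ((Sat lam H' T k (bigAnd (r.body.map TLit.toFormula)) →
          Sat lam H' T k (bigOr (r.head.map TLit.toFormula))) ↔
        (PSat (stamp lam H') (stamp lam T) ((r.body.map (tauLit k)).foldr .conj .verum) →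
          PSat (stamp lam H') (stamp lam T) ((r.head.map (tauLit k)).foldr .disj .falsum))) := by
    simp only [sat_bigAnd, sat_bigOr, psat_foldr_conj, psat_foldr_disj, List.forall_mem_map]
    simp only [List.mem_map, exists_exists_and_eq_and]
    exact imp_congr (forall₂_congr fun b hb => lit (.inl hb))
      (exists_congr fun b => and_congr_right fun hb => lit (.inr hb))
  exact and_congr (rule H) (rule T)

lemma sat_toFormula_total {l : ℕ∞} {H T : ℕ → Set A} {k : ℕ} {r : TRule A}
    (h : Sat l H T k r.toFormula) : Sat l T T k r.toFormula :=
  ⟨h.2, h.2⟩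

lemma sat_final_iff {l : ℕ∞} {H T : ℕ → Set A} {k : ℕ} :
    Sat l H T k Formula.final ↔ ¬ ((k + 1 : ℕ) : ℕ∞) < l := by
  simp [Formula.final, Formula.neg, Sat, satAux]

lemma sat_wnext_always_iff {l : ℕ∞} {H T : ℕ → Set A} {i : ℕ} {φ : Formula A} :
    Sat l H T i (Formula.wnext (Formula.always φ)) ↔
      ∀ k, i < k → (k : ℕ∞) < l → Sat l H T k φ := by
  change Sat l H T i (.next _) ∨ Sat l H T i Formula.final ↔ _
  rw [sat_final_iff]
  simp only [Formula.always, Sat, satAux, and_false, exists_false, or_false, Nat.succ_le_iff]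
  by_cases hnext : ((i + 1 : ℕ) : ℕ∞) < l
  · simp only [hnext, true_and, not_true_eq_false, or_false]
  · simp only [hnext, false_and, not_false_eq_true, or_true, true_iff]
    intro k hik hk
    exact absurd (lt_of_le_of_lt (by exact_mod_cast hik) hk) hnext

lemma sat_always_final_impl_iff {lam i : ℕ} (hi : i < lam) {H T : ℕ → Set A} {φ : Formula A} :
    Sat lam H T i (Formula.always (.impl Formula.final φ)) ↔
      Sat lam H T (lam - 1) φ ∧ Sat lam T T (lam - 1) φ := by
  have hfinal {H' : ℕ → Set A} {k : ℕ} (hk : k < lam) :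
      Sat lam H' T k Formula.final ↔ k = lam - 1 := by
    rw [sat_final_iff, Nat.cast_lt]
    omega
  simp only [Formula.always, Sat, satAux, and_false, exists_false, or_false, Nat.cast_lt]
  constructor
  · intro h
    have h' := h (lam - 1) (by omega) (by omega)
    exact ⟨h'.1 ((hfinal (by omega)).2 rfl), h'.2 ((hfinal (by omega)).2 rfl)⟩
  · rintro ⟨hH, hT⟩ k - hk
    exact ⟨fun hf => (hfinal hk).1 hf ▸ hH, fun hf => (hfinal hk).1 hf ▸ hT⟩

lemma isModel_progTheory_iff {PI PD PF : Set (TRule A)}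
    (hI : ∀ r ∈ PI, r.Regular) (hF : ∀ r ∈ PF, r.Regular)
    {lam : ℕ} (hlam : 0 < lam) (H T : ℕ → Set A) :
    IsModel lam H T (progTheory PI PD PF) ↔
      ∀ f ∈ tauProg lam PI PD PF, PSat (stamp lam H) (stamp lam T) f := by
  have hlast : lam - 1 < lam := by omega
  have final {r : TRule A} (hr : r ∈ PF) :
      Sat lam H T 0 (Formula.always (.impl Formula.final r.toFormula)) ↔
        PSat (stamp lam H) (stamp lam T) (tauRule (lam - 1) r) := by
    rw [sat_always_final_impl_iff hlam, and_iff_left_of_imp sat_toFormula_total]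
    exact sat_toFormula_iff_psat_tauRule hlast H T (.inl (hF r hr))
  simp only [IsModel, progTheory, tauProg, Set.mem_union, or_imp, forall_and,
    Set.forall_mem_image, Set.mem_ofPred_eq, forall_exists_index, and_imp,
    sat_wnext_always_iff, Nat.cast_lt, Nat.cast_pos, hlam, true_and]
  have initial {r : TRule A} (hr : r ∈ PI) := sat_toFormula_iff_psat_tauRule hlam H T (.inl (hI r hr))
  have dynamic {r : TRule A} {k : ℕ} (hk1 : 0 < k) (hk : k < lam) :=
    sat_toFormula_iff_psat_tauRule hk H T (r := r) (.inr hk1)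
  refine and_congr (and_congr (forall₂_congr fun r hr => initial hr) ⟨?_, ?_⟩)
    (forall₂_congr fun r hr => final hr)
  · rintro h _ r hr k hk1 hk rfl
    exact (dynamic hk1 hk).1 (h hr k hk1 hk)
  · exact fun h r hr k hk1 hk => (dynamic hk1 hk).2 (h _ r hr k hk1 hk rfl)

end BoundedTranslation

open BoundedTranslation

/-- Bounded translation correctness: for a temporal logic program `P` (regular
initial and final rules) and trace `T` of finite length `λ ≥ 1`, `T` is a
temporal stable model of `P` iff the corresponding set of stamped atoms
`X = {(a,i) : i < λ, a ∈ T_i}` is a stable model of `τ_λ(P)`. -/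
theorem bounded_translation_correct {A : Type} (PI PD PF : Set (TRule A))
    (hI : ∀ r ∈ PI, r.Regular) (hF : ∀ r ∈ PF, r.Regular)
    (lam : ℕ) (hlam : 1 ≤ lam) (T : ℕ → Set A) :
    IsTS (lam : ℕ∞) T (progTheory PI PD PF) ↔
      StableModel {p : A × ℕ | p.2 < lam ∧ p.1 ∈ T p.2} (tauProg lam PI PD PF) := by
  have model := isModel_progTheory_iff hI hF hlam (PD := PD)
  change _ ↔ StableModel (stamp lam T) _
  refine and_congr (model T T) ⟨fun hmin X hXT hne hX => ?_, fun hmin H hlt hH => ?_⟩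
  · obtain ⟨H, rfl⟩ : ∃ H, stamp lam H = X := ⟨_, stamp_unstamp hXT⟩
    exact hmin _ (traceLt_iff_stamp_ssubset.2 ⟨hXT, hne⟩) ((model _ T).2 hX)
  · obtain ⟨hHT, hne⟩ := traceLt_iff_stamp_ssubset.1 hlt
    exact hmin _ hHT hne ((model H T).1 hH)
end
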